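/- arXiv:1106.6024 — 2 statements merged into one kernel-verified Lean document; each statement's English description precedes it below -/
import Mathlib

section
/- In each round t of AdaBoost, if S_{t−1} > 0 then the edge satisfies δ_t ≥ R_{t−1}/S_{t−1}. -/
/-- The exponential loss `L(λ) = (1/m) ∑ᵢ exp(−(Mλ)ᵢ)`. -/
noncomputable def expLoss {m N : ℕ} (M : Matrix (Fin m) (Fin N) ℝ) (lam : Fin N → ℝ) : ℝ :=
  (1 / (m : ℝ)) * ∑ i, Real.exp (-(M.mulVec lam i))

/-- AdaBoost's distribution `D(i) ∝ exp(−(Mλ)ᵢ)`. -/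
noncomputable def wt {m N : ℕ} (M : Matrix (Fin m) (Fin N) ℝ) (lam : Fin N → ℝ) (i : Fin m) : ℝ :=
  Real.exp (-(M.mulVec lam i)) / ∑ i', Real.exp (-(M.mulVec lam i'))

/-- The ℓ₁-norm on `ℝ^N`. -/
noncomputable def l1 {N : ℕ} (v : Fin N → ℝ) : ℝ := ∑ j, |v j|

/-- `lam`, `j`, `r` describe a run of AdaBoost on feature matrix `M`:
`lam 0 = 0`, and at each round the coordinate `j t` of maximal absolute correlation is
chosen, `r t` is its correlation, and the step is `α_t = ½ ln((1+r_t)/(1−r_t))`. -/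
def IsAdaBoost {m N : ℕ} (M : Matrix (Fin m) (Fin N) ℝ)
    (lam : ℕ → Fin N → ℝ) (j : ℕ → Fin N) (r : ℕ → ℝ) : Prop :=
  lam 0 = 0 ∧
  ∀ t : ℕ,
    (∀ j' : Fin N, |∑ i, wt M (lam t) i * M i j'| ≤ |∑ i, wt M (lam t) i * M i (j t)|) ∧
    r t = ∑ i, wt M (lam t) i * M i (j t) ∧
    lam (t + 1) = lam t + Pi.single (j t) ((1 / 2) * Real.log ((1 + r t) / (1 - r t)))


/-- The logarithmic suboptimality `R(λ) = ln L(λ) − ln L(λ*)` relative to a reference `λ*`. -/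
noncomputable def Rlog {m N : ℕ} (M : Matrix (Fin m) (Fin N) ℝ)
    (lamStar lam : Fin N → ℝ) : ℝ :=
  Real.log (expLoss M lam) - Real.log (expLoss M lamStar)

/-- The ℓ₁-distance `S(λ) = inf {‖μ − λ‖₁ : L(μ) ≤ L(λ*)}` from `λ` to the set of
combinations achieving the target loss. -/
noncomputable def Sdist {m N : ℕ} (M : Matrix (Fin m) (Fin N) ℝ)
    (lamStar lam : Fin N → ℝ) : ℝ :=
  sInf {d : ℝ | ∃ μ : Fin N → ℝ, expLoss M μ ≤ expLoss M lamStar ∧ d = l1 (μ - lam)}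

/-!
`log L` is convex, and its gradient at `λ` is `−(Dᵀ M)`, the vector of correlations under
AdaBoost's distribution `D`. The gradient inequality (Jensen's inequality for `exp` under the
weights `D`) gives `ln L(λ) − ln L(μ) ≤ ⟨Dᵀ M, μ − λ⟩ ≤ δ ‖μ − λ‖₁`, where AdaBoost's choice of
coordinate makes the edge `δ` the largest correlation in absolute value. For every `μ` with
`L(μ) ≤ L(λ*)` this bounds `R` by `δ ‖μ − λ‖₁`, and taking the infimum over such `μ` gives
`R ≤ δ S`.
-/

open Matrix

lemma dotProduct_le_mul_l1 {N : ℕ} {c v : Fin N → ℝ} {δ : ℝ} (hc : ∀ j, |c j| ≤ δ) :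
    c ⬝ᵥ v ≤ δ * l1 v := by
  rw [l1, Finset.mul_sum]
  refine Finset.sum_le_sum fun j _ => ?_
  calc c j * v j ≤ |c j| * |v j| := by rw [← abs_mul]; exact le_abs_self _
    _ ≤ δ * |v j| := mul_le_mul_of_nonneg_right (hc j) (abs_nonneg _)

section ExpLoss

variable {m N : ℕ} (M : Matrix (Fin m) (Fin N) ℝ)

lemma sum_exp_neg_mulVec_pos (hm : 0 < m) (lam : Fin N → ℝ) :
    0 < ∑ i, Real.exp (-(M *ᵥ lam) i) :=
  Finset.sum_pos (fun _ _ => Real.exp_pos _) ⟨⟨0, hm⟩, Finset.mem_univ _⟩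

lemma expLoss_pos (hm : 0 < m) (lam : Fin N → ℝ) : 0 < expLoss M lam :=
  mul_pos (by positivity) (sum_exp_neg_mulVec_pos M hm lam)

lemma wt_nonneg (lam : Fin N → ℝ) (i : Fin m) : 0 ≤ wt M lam i :=
  div_nonneg (Real.exp_pos _).le (Finset.sum_nonneg fun _ _ => (Real.exp_pos _).le)

lemma sum_wt (hm : 0 < m) (lam : Fin N → ℝ) : ∑ i, wt M lam i = 1 := by
  simp only [wt, ← Finset.sum_div]
  exact div_self (sum_exp_neg_mulVec_pos M hm lam).ne'

lemma sum_wt_mul_exp_eq_div (hm : 0 < m) (lam μ : Fin N → ℝ) :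
    ∑ i, wt M lam i * Real.exp ((M *ᵥ lam) i - (M *ᵥ μ) i) = expLoss M μ / expLoss M lam := by
  have hm' : (m : ℝ) ≠ 0 := by exact_mod_cast hm.ne'
  rw [expLoss, expLoss, mul_div_mul_left _ _ (one_div_ne_zero hm'), Finset.sum_div]
  refine Finset.sum_congr rfl fun i _ => ?_
  rw [wt, div_mul_eq_mul_div, ← Real.exp_add]
  ring_nf

lemma log_expLoss_sub_le (hm : 0 < m) (lam μ : Fin N → ℝ) :
    Real.log (expLoss M lam) - Real.log (expLoss M μ) ≤ (wt M lam ᵥ* M) ⬝ᵥ (μ - lam) := by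
  set x : Fin m → ℝ := fun i => (M *ᵥ lam) i - (M *ᵥ μ) i
  have jensen : Real.exp (∑ i, wt M lam i * x i) ≤ expLoss M μ / expLoss M lam := by
    rw [← sum_wt_mul_exp_eq_div M hm]
    simpa only [smul_eq_mul] using
      convexOn_exp.map_sum_le (fun i _ => wt_nonneg M lam i) (sum_wt M hm lam)
        (fun i _ => Set.mem_univ (x i))
  have hx : ∑ i, wt M lam i * x i = -((wt M lam ᵥ* M) ⬝ᵥ (μ - lam)) := by
    rw [← dotProduct_mulVec, mulVec_sub, ← dotProduct_neg, neg_sub]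
    rfl
  have hpos := expLoss_pos M hm
  have hlog := (Real.le_log_iff_exp_le (div_pos (hpos μ) (hpos lam))).mpr jensen
  rw [Real.log_div (hpos μ).ne' (hpos lam).ne', hx] at hlog
  linarith

lemma Sdist_nonneg (lamStar lam : Fin N → ℝ) : 0 ≤ Sdist M lamStar lam :=
  Real.sInf_nonneg <| by
    rintro _ ⟨μ, -, rfl⟩
    exact Finset.sum_nonneg fun _ _ => abs_nonneg _

lemma Rlog_le_mul_Sdist (hm : 0 < m) {lamStar lam : Fin N → ℝ} {δ : ℝ}
    (hδ : ∀ j, |(wt M lam ᵥ* M) j| ≤ δ) (hδ₀ : 0 ≤ δ) :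
    Rlog M lamStar lam ≤ δ * Sdist M lamStar lam := by
  rw [Sdist, ← smul_eq_mul, ← Real.sInf_smul_of_nonneg hδ₀]
  refine le_csInf (Set.smul_set_nonempty.mpr ⟨_, lamStar, le_rfl, rfl⟩) ?_
  rintro _ ⟨_, ⟨μ, hμ, rfl⟩, rfl⟩
  calc Rlog M lamStar lam ≤ Real.log (expLoss M lam) - Real.log (expLoss M μ) := by
        rw [Rlog]
        gcongr
        exact expLoss_pos M hm μ
    _ ≤ δ * l1 (μ - lam) := (log_expLoss_sub_le M hm lam μ).trans (dotProduct_le_mul_l1 hδ)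

end ExpLoss

theorem adaboost_edge_ge_R_div_S_general {m N : ℕ} (hm : 0 < m)
    (M : Matrix (Fin m) (Fin N) ℝ)
    (lam : ℕ → Fin N → ℝ) (j : ℕ → Fin N) (r : ℕ → ℝ)
    (hAda : IsAdaBoost M lam j r)
    (lamStar : Fin N → ℝ) (t : ℕ) :
    Rlog M lamStar (lam t) / Sdist M lamStar (lam t) ≤ |r t| := by
  obtain ⟨hmax, hr, -⟩ := hAda.2 t
  have hδ : ∀ j', |(wt M (lam t) ᵥ* M) j'| ≤ |r t| := by
    rw [hr]
    exact hmax
  exact div_le_of_le_mul₀ (Sdist_nonneg M lamStar (lam t)) (abs_nonneg _)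
    (Rlog_le_mul_Sdist M hm hδ (abs_nonneg _))

/-- In each round `t` of AdaBoost, if `S_{t−1} > 0` then the edge satisfies
`δ_t ≥ R_{t−1}/S_{t−1}`. (Round `t` is the step from `lam t` to `lam (t+1)`, with edge `|r t|`.) -/
theorem adaboost_edge_ge_R_div_S {m N : ℕ} (hm : 0 < m)
    (M : Matrix (Fin m) (Fin N) ℝ) (hM : ∀ i j, |M i j| ≤ 1)
    (lam : ℕ → Fin N → ℝ) (j : ℕ → Fin N) (r : ℕ → ℝ)
    (hAda : IsAdaBoost M lam j r)
    (lamStar : Fin N → ℝ) (t : ℕ)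
    (hS : 0 < Sdist M lamStar (lam t)) :
    Rlog M lamStar (lam t) / Sdist M lamStar (lam t) ≤ |r t| :=
  adaboost_edge_ge_R_div_S_general hm M lam j r hAda lamStar t
end

section
/- Let M be the 3×2 feature matrix with rows (+1, −1), (−1, +1), (+1, +1), for which inf_λ L(λ) = 2/3. Then every run of AdaBoost on M satisfies L(λ^T) ≥ 2/3 + 2/(9T) for every integer T ≥ 1; consequently, for any ε with 0 < ε < 1/3, at least 2/(9ε) rounds are required to achieve L(λ^T) ≤ 2/3 + ε. -/
/-- The 3×2 feature matrix with rows `(+1,−1)`, `(−1,+1)`, `(+1,+1)`. -/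
noncomputable def M3 : Matrix (Fin 3) (Fin 2) ℝ := !![1, -1; -1, 1; 1, 1]

open Real

noncomputable def corr {m N : ℕ} (M : Matrix (Fin m) (Fin N) ℝ) (v : Fin N → ℝ) (j : Fin N) : ℝ :=
  ∑ i, wt M v i * M i j

lemma expLoss_nonneg {m N : ℕ} (M : Matrix (Fin m) (Fin N) ℝ) (v : Fin N → ℝ) :
    0 ≤ expLoss M v := by
  unfold expLoss; positivity

lemma expLoss_zero {m N : ℕ} (M : Matrix (Fin m) (Fin N) ℝ) (hm : m ≠ 0) : expLoss M 0 = 1 := by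
  simp [expLoss, hm]

lemma exp_add_half_log_sq (a : ℝ) {x : ℝ} (hx : 0 < x) :
    exp (a + 1 / 2 * log x) ^ 2 = exp a ^ 2 * x := by
  rw [← exp_nat_mul, ← exp_nat_mul, mul_add, exp_add, Nat.cast_ofNat,
    show (2 : ℝ) * (1 / 2 * log x) = log x by ring, exp_log hx]

namespace IsAdaBoost

variable {m N : ℕ} {M : Matrix (Fin m) (Fin N) ℝ} {lam : ℕ → Fin N → ℝ} {j : ℕ → Fin N}
  {r : ℕ → ℝ}

lemma selects (hAda : IsAdaBoost M lam j r) (t : ℕ) {k : Fin N}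
    (hk : ∀ j' ≠ k, |corr M (lam t) j'| < |corr M (lam t) k|) : j t = k := by
  by_contra hne
  exact (hk (j t) hne).not_ge ((hAda.2 t).1 k)

lemma exp_sq_succ_self (hAda : IsAdaBoost M lam j r) (t : ℕ)
    (hr : 0 < (1 + r t) / (1 - r t)) :
    exp (lam (t + 1) (j t)) ^ 2 = exp (lam t (j t)) ^ 2 * ((1 + r t) / (1 - r t)) := by
  rw [(hAda.2 t).2.2, Pi.add_apply, Pi.single_eq_same, exp_add_half_log_sq _ hr]

lemma r_eq (hAda : IsAdaBoost M lam j r) (t : ℕ) : r t = corr M (lam t) (j t) :=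
  (hAda.2 t).2.1

lemma succ_of_ne (hAda : IsAdaBoost M lam j r) (t : ℕ) {k : Fin N} (hk : k ≠ j t) :
    lam (t + 1) k = lam t k := by
  rw [(hAda.2 t).2.2, Pi.add_apply, Pi.single_eq_of_ne hk, add_zero]

end IsAdaBoost

lemma fin_two_rev_ne_self (k : Fin 2) : k.rev ≠ k := by
  revert k; decide

lemma fin_two_eq_rev_of_ne {a b : Fin 2} : a ≠ b → a = b.rev := by
  revert a b; decide

lemma mulVec_M3 (v : Fin 2 → ℝ) : M3.mulVec v = ![v 0 - v 1, v 1 - v 0, v 0 + v 1] := by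
  ext i
  fin_cases i <;> simp [M3, Matrix.mulVec, dotProduct, sub_eq_add_neg, add_comm]

lemma exp_neg_mulVec_M3 (v : Fin 2 → ℝ) (i : Fin 3) :
    exp (-(M3.mulVec v i)) =
      ![exp (v 1) / exp (v 0), exp (v 0) / exp (v 1), (exp (v 0) * exp (v 1))⁻¹] i := by
  fin_cases i <;> simp [mulVec_M3, exp_sub, exp_neg, exp_add]

lemma M3_apply (i : Fin 3) (k : Fin 2) : M3 i k = ![![1, -1], ![-1, 1], ![1, 1]] i k := rfl

lemma expLoss_M3 (v : Fin 2 → ℝ) (k : Fin 2) :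
    expLoss M3 v = (exp (v k) ^ 2 + exp (v k.rev) ^ 2 + 1) / (3 * (exp (v k) * exp (v k.rev))) := by
  have h0 := exp_pos (v 0)
  have h1 := exp_pos (v 1)
  simp only [expLoss, exp_neg_mulVec_M3, Fin.sum_univ_three, Matrix.cons_val_zero,
    Matrix.cons_val_one, Matrix.cons_val_two, Matrix.tail_cons, Matrix.head_cons]
  fin_cases k
  · dsimp; field_simp; ring
  · dsimp; field_simp

lemma corr_M3 (v : Fin 2 → ℝ) (k : Fin 2) :
    corr M3 v k = (exp (v k.rev) ^ 2 - exp (v k) ^ 2 + 1) / (exp (v k) ^ 2 + exp (v k.rev) ^ 2 + 1) := by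
  have h0 := exp_pos (v 0)
  have h1 := exp_pos (v 1)
  simp only [corr, wt, exp_neg_mulVec_M3, M3_apply, Fin.sum_univ_three, Matrix.cons_val_zero,
    Matrix.cons_val_one, Matrix.cons_val_two, Matrix.tail_cons, Matrix.head_cons]
  fin_cases k <;> (dsimp; field_simp; ring)

lemma two_thirds_le_expLoss_M3 (v : Fin 2 → ℝ) : 2 / 3 ≤ expLoss M3 v := by
  have h0 := exp_pos (v 0)
  have h1 := exp_pos (v 1)
  rw [expLoss_M3 v 0, show (0 : Fin 2).rev = 1 from rfl, le_div_iff₀ (by positivity)]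
  nlinarith [sq_nonneg (exp (v 0) - exp (v 1))]

lemma expLoss_M3_const (c : ℝ) : expLoss M3 (fun _ => c) = 2 / 3 + 1 / (3 * exp c ^ 2) := by
  have := exp_pos c
  rw [expLoss_M3 _ 0]
  field_simp
  ring

lemma iInf_expLoss_M3 : ⨅ v, expLoss M3 v = 2 / 3 := by
  refine ciInf_eq_of_forall_ge_of_forall_gt_exists_lt two_thirds_le_expLoss_M3 fun w hw => ?_
  have hδ : 0 < w - 2 / 3 := sub_pos.mpr hw
  refine ⟨fun _ => -log (w - 2 / 3) / 2, ?_⟩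
  rw [expLoss_M3_const, ← exp_nat_mul, Nat.cast_ofNat, mul_div_cancel₀ _ two_ne_zero, exp_neg,
    exp_log hδ]
  field_simp
  linarith

def ExpSqConsecutive (t : ℕ) (v : Fin 2 → ℝ) : Prop :=
  ∃ k : Fin 2, exp (v k) ^ 2 = t + 1 ∧ exp (v k.rev) ^ 2 = t

lemma expLoss_sq_of_expSqConsecutive {t : ℕ} {v : Fin 2 → ℝ} (h : ExpSqConsecutive t v) :
    expLoss M3 v ^ 2 = 4 * (t + 1) / (9 * t) := by
  obtain ⟨k, hk, hrev⟩ := h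
  have ht : (t : ℝ) ≠ 0 := by rw [← hrev]; positivity
  rw [expLoss_M3 v k, div_pow, mul_pow, mul_pow, hk, hrev]
  field_simp
  ring

lemma two_thirds_add_le_of_sq_eq {x L : ℝ} (hx : 1 / 3 ≤ x) (hL : 0 ≤ L)
    (h : L ^ 2 = 4 * (x + 1) / (9 * x)) : 2 / 3 + 2 / (9 * x) ≤ L := by
  refine le_of_pow_le_pow_left₀ two_ne_zero hL ?_
  rw [h, show 2 / 3 + 2 / (9 * x) = (6 * x + 2) / (9 * x) by field_simp; ring, div_pow,
    div_le_div_iff₀ (by positivity) (by positivity)]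
  nlinarith

namespace IsAdaBoost

variable {lam : ℕ → Fin 2 → ℝ} {j : ℕ → Fin 2} {r : ℕ → ℝ}

lemma expSqConsecutive_one (hAda : IsAdaBoost M3 lam j r) : ExpSqConsecutive 1 (lam 1) := by
  have hcorr : ∀ k, corr M3 (lam 0) k = 1 / 3 := fun k => by
    rw [corr_M3, hAda.1]; norm_num
  have hr : (1 + r 0) / (1 - r 0) = 2 := by
    rw [hAda.r_eq, hcorr]; norm_num
  refine ⟨j 0, ?_, ?_⟩
  · rw [hAda.exp_sq_succ_self 0 (by rw [hr]; norm_num), hr, hAda.1]; norm_num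
  · rw [hAda.succ_of_ne 0 (fin_two_rev_ne_self _), hAda.1]; norm_num

lemma expSqConsecutive_succ (hAda : IsAdaBoost M3 lam j r) {t : ℕ} (ht : 1 ≤ t)
    (h : ExpSqConsecutive t (lam t)) : ExpSqConsecutive (t + 1) (lam (t + 1)) := by
  obtain ⟨k, hk, hrev⟩ := h
  have ht0 : (0 : ℝ) < t := by exact_mod_cast ht
  have hcorr_k : corr M3 (lam t) k = 0 := by rw [corr_M3, hk, hrev]; ring
  have hcorr_rev : corr M3 (lam t) k.rev = 1 / (t + 1) := by
    rw [corr_M3, Fin.rev_rev, hk, hrev]; field_simp; ring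
  have hj : j t = k.rev := hAda.selects t fun j' hj' => by
    rw [fin_two_eq_rev_of_ne hj', Fin.rev_rev, hcorr_k, hcorr_rev, abs_zero]
    positivity
  have hr : (1 + r t) / (1 - r t) = (t + 2) / t := by
    rw [hAda.r_eq, hj, hcorr_rev]; field_simp [ht0.ne']; ring
  refine ⟨k.rev, ?_, ?_⟩
  · rw [← hj, hAda.exp_sq_succ_self t (by rw [hr]; positivity), hr, hj, hrev,
      mul_div_cancel₀ _ ht0.ne']
    push_cast; ring
  · rw [Fin.rev_rev, hAda.succ_of_ne t (hj ▸ (fin_two_rev_ne_self k).symm), hk]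
    push_cast; ring

lemma expSqConsecutive (hAda : IsAdaBoost M3 lam j r) {t : ℕ} (ht : 1 ≤ t) :
    ExpSqConsecutive t (lam t) := by
  induction t, ht using Nat.le_induction with
  | base => exact hAda.expSqConsecutive_one
  | succ t ht ih => exact hAda.expSqConsecutive_succ ht ih

end IsAdaBoost

/-- On the matrix `M3`, whose optimal exponential loss is `2/3`, every run
of AdaBoost satisfies `L(λ^T) ≥ 2/3 + 2/(9T)` for all `T ≥ 1`; consequently for any
`0 < ε < 1/3`, at least `2/(9ε)` rounds are needed to reach loss `2/3 + ε`. -/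
theorem adaboost_eps_lower_bound
    (lam : ℕ → Fin 2 → ℝ) (j : ℕ → Fin 2) (r : ℕ → ℝ)
    (hAda : IsAdaBoost M3 lam j r) :
    (⨅ lam' : Fin 2 → ℝ, expLoss M3 lam') = 2 / 3 ∧
    (∀ T : ℕ, 1 ≤ T → 2 / 3 + 2 / (9 * (T : ℝ)) ≤ expLoss M3 (lam T)) ∧
    (∀ ε : ℝ, 0 < ε → ε < 1 / 3 →
      ∀ T : ℕ, expLoss M3 (lam T) ≤ 2 / 3 + ε → 2 / (9 * ε) ≤ (T : ℝ)) := by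
  have hbound : ∀ T : ℕ, 1 ≤ T → 2 / 3 + 2 / (9 * (T : ℝ)) ≤ expLoss M3 (lam T) := by
    intro T hT
    have hT' : (1 : ℝ) ≤ T := by exact_mod_cast hT
    exact two_thirds_add_le_of_sq_eq (by linarith) (expLoss_nonneg _ _)
      (expLoss_sq_of_expSqConsecutive (hAda.expSqConsecutive hT))
  refine ⟨iInf_expLoss_M3, hbound, fun ε hε hε3 T hT => ?_⟩
  have hT1 : 1 ≤ T := by
    refine Nat.one_le_iff_ne_zero.mpr fun hT0 => ?_
    rw [hT0, hAda.1, expLoss_zero _ three_ne_zero] at hT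
    linarith
  have hT1' : (1 : ℝ) ≤ T := by exact_mod_cast hT1
  have h := (hbound T hT1).trans hT
  rw [div_le_iff₀ (by positivity)]
  rw [add_le_add_iff_left, div_le_iff₀ (by positivity)] at h
  linarith
end
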